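/- Let F be a spreading linear triple system on a finite set V with |V| > 5. For v ∈ V let d̄(v) denote the number of vertices u ∈ V, u ≠ v, such that the pair {u,v} is not covered. Then Σ_{v ∈ V} C(d̄(v), 2) = Σ_{T ∈ F} Val(T), where C(k,2) = k(k−1)/2 denotes the binomial coefficient. -/

import Mathlib

open Finset

variable {α : Type*}

/-- A pair of (distinct) vertices is covered if it lies in some triple of `F`. -/
def Covered [DecidableEq α] (F : Finset (Finset α)) (x y : α) : Prop :=
  ∃ T ∈ F, x ∈ T ∧ y ∈ T

instance [DecidableEq α] (F : Finset (Finset α)) (x y : α) : Decidable (Covered F x y) :=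
  inferInstanceAs (Decidable (∃ T ∈ F, x ∈ T ∧ y ∈ T))

/-- Linear triple system on `V`. -/
def IsLinearTS [DecidableEq α] (V : Finset α) (F : Finset (Finset α)) : Prop :=
  (∀ T ∈ F, T ⊆ V ∧ T.card = 3) ∧
    ∀ x ∈ V, ∀ y ∈ V, x ≠ y → (F.filter fun T => x ∈ T ∧ y ∈ T).card ≤ 1

/-- Steiner triple system on `V`. -/
def IsSTS [DecidableEq α] (V : Finset α) (F : Finset (Finset α)) : Prop :=
  (∀ T ∈ F, T ⊆ V ∧ T.card = 3) ∧
    ∀ x ∈ V, ∀ y ∈ V, x ≠ y → (F.filter fun T => x ∈ T ∧ y ∈ T).card = 1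

/-- Neighbourhood of `V'` with respect to the triple system `F` on `V`. -/
def nbhd [DecidableEq α] (V : Finset α) (F : Finset (Finset α)) (V' : Finset α) : Finset α :=
  (V \ V').filter fun z => ∃ x ∈ V', ∃ y ∈ V', x ≠ y ∧ ({x, y, z} : Finset α) ∈ F

/-- `F` is spreading: the closure of every nontrivial subset is `V`. -/
def IsSpreading [DecidableEq α] (V : Finset α) (F : Finset (Finset α)) : Prop :=
  ∀ V' ⊆ V, 3 ≤ V'.card → V' ∉ F →
    ∀ W, V' ⊆ W → W ⊆ V → nbhd V F W = ∅ → W = V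

/-- `F` is weakly spreading. -/
def IsWeaklySpreading [DecidableEq α] (V : Finset α) (F : Finset (Finset α)) : Prop :=
  ∀ F' ⊆ F, 2 ≤ F'.card →
    ∀ W, F'.biUnion id ⊆ W → W ⊆ V → nbhd V F W = ∅ → W = V

/-- `Val(T)`: number of private neighbours of the triple `T`. -/
def valT [DecidableEq α] (V : Finset α) (F : Finset (Finset α)) (T : Finset α) : ℕ :=
  ((V \ T).filter fun v => (T.filter fun t => Covered F v t).card = 1).card

/-- Two triples are adjacent if pairs of each span a `C₄` in the complement of the skeleton. -/
def AdjT [DecidableEq α] (F : Finset (Finset α)) (T T' : Finset α) : Prop :=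
  ∃ v₁ ∈ T, ∃ v₂ ∈ T, ∃ u₁ ∈ T', ∃ u₂ ∈ T',
    v₁ ≠ v₂ ∧ u₁ ≠ u₂ ∧ v₁ ≠ u₁ ∧ v₁ ≠ u₂ ∧ v₂ ≠ u₁ ∧ v₂ ≠ u₂ ∧
    ¬Covered F v₁ u₁ ∧ ¬Covered F u₁ v₂ ∧ ¬Covered F v₂ u₂ ∧ ¬Covered F u₂ v₁

instance [DecidableEq α] (F : Finset (Finset α)) (T T' : Finset α) : Decidable (AdjT F T T') :=
  inferInstanceAs (Decidable (∃ v₁ ∈ T, ∃ v₂ ∈ T, ∃ u₁ ∈ T', ∃ u₂ ∈ T',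
    v₁ ≠ v₂ ∧ u₁ ≠ u₂ ∧ v₁ ≠ u₁ ∧ v₁ ≠ u₂ ∧ v₂ ≠ u₁ ∧ v₂ ≠ u₂ ∧
    ¬Covered F v₁ u₁ ∧ ¬Covered F u₁ v₂ ∧ ¬Covered F v₂ u₂ ∧ ¬Covered F u₂ v₁))

/-!
Double counting. A pair `(v, {u, w})` with `u, w` both non-neighbours of `v` corresponds to the
pair `(T, v)`, where `T = {u, w, x}` is the triple through `u, w` and `v` is a private neighbour
of `T`. Spreading rules out two configurations whose vertex sets would be closed proper subsets
of `V`: an uncovered triangle `{u, v, w}`, so `{u, w}` does lie in a triple `T`; and a vertex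
outside `T` covered with no vertex of `T`, so `{v, x}` is covered. Linearity makes `T` unique.
-/

variable [DecidableEq α] {V : Finset α} {F : Finset (Finset α)}

theorem Finset.exists_eq_insert_insert_singleton_of_card_eq_three {s : Finset α} (hs : #s = 3)
    {a b : α} (ha : a ∈ s) (hb : b ∈ s) (hab : a ≠ b) : ∃ c, s = {a, b, c} := by
  have hb' : b ∈ s.erase a := mem_erase.2 ⟨hab.symm, hb⟩
  have hcard : #((s.erase a).erase b) = 1 := by
    rw [card_erase_of_mem hb', card_erase_of_mem ha, hs]
  obtain ⟨c, hc⟩ := card_eq_one.1 hcard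
  exact ⟨c, by rw [← hc, insert_erase hb', insert_erase ha]⟩

theorem Covered.symm {x y : α} (h : Covered F x y) : Covered F y x := by
  obtain ⟨T, hT, hx, hy⟩ := h
  exact ⟨T, hT, hy, hx⟩

theorem covered_comm {x y : α} : Covered F x y ↔ Covered F y x :=
  ⟨Covered.symm, Covered.symm⟩

namespace IsLinearTS

variable {T T' : Finset α} {v : α}

theorem subset (hL : IsLinearTS V F) (hT : T ∈ F) : T ⊆ V := (hL.1 T hT).1

theorem card_eq_three (hL : IsLinearTS V F) (hT : T ∈ F) : #T = 3 := (hL.1 T hT).2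

theorem eq_of_mem_of_mem (hL : IsLinearTS V F) {a b : α} (hT : T ∈ F) (hT' : T' ∈ F)
    (hab : a ≠ b) (haT : a ∈ T) (hbT : b ∈ T) (haT' : a ∈ T') (hbT' : b ∈ T') : T = T' :=
  card_le_one.mp (hL.2 a (hL.subset hT haT) b (hL.subset hT hbT) hab)
    T (mem_filter.2 ⟨hT, haT, hbT⟩) T' (mem_filter.2 ⟨hT', haT', hbT'⟩)

theorem card_filter_not_covered (hL : IsLinearTS V F) (hT : T ∈ F)
    (hone : #(T.filter fun t => Covered F v t) = 1) :
    #(T.filter fun t => ¬Covered F v t) = 2 := by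
  have := card_filter_add_card_filter_not (s := T) (fun t => Covered F v t)
  rw [hL.card_eq_three hT] at this
  omega

theorem filter_not_covered_mem_powersetCard (hL : IsLinearTS V F) (hT : T ∈ F) (hvT : v ∉ T)
    (hone : #(T.filter fun t => Covered F v t) = 1) :
    T.filter (fun t => ¬Covered F v t) ∈
      ((V.erase v).filter fun u => ¬Covered F u v).powersetCard 2 := by
  refine mem_powersetCard.2 ⟨fun t ht => ?_, hL.card_filter_not_covered hT hone⟩
  rw [mem_filter] at ht ⊢
  exact ⟨mem_erase.2 ⟨ne_of_mem_of_not_mem ht.1 hvT, hL.subset hT ht.1⟩, fun h => ht.2 h.symm⟩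

theorem eq_of_filter_not_covered_eq (hL : IsLinearTS V F) (hT : T ∈ F) (hT' : T' ∈ F)
    (hone : #(T.filter fun t => Covered F v t) = 1)
    (h : T.filter (fun t => ¬Covered F v t) = T'.filter (fun t => ¬Covered F v t)) : T = T' := by
  obtain ⟨a, b, hab, hpair⟩ := card_eq_two.1 (hL.card_filter_not_covered hT hone)
  have ha : a ∈ T.filter (fun t => ¬Covered F v t) := hpair ▸ mem_insert_self a {b}
  have hb : b ∈ T.filter (fun t => ¬Covered F v t) := hpair ▸ by simp
  have ha' := h ▸ ha
  have hb' := h ▸ hb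
  rw [mem_filter] at ha hb ha' hb'
  exact hL.eq_of_mem_of_mem hT hT' hab ha.1 hb.1 ha'.1 hb'.1

end IsLinearTS

theorem nbhd_eq_empty_of_forall_triple_subset {W : Finset α}
    (h : ∀ a ∈ W, ∀ b ∈ W, a ≠ b → ∀ T ∈ F, a ∈ T → b ∈ T → T ⊆ W) : nbhd V F W = ∅ := by
  refine eq_empty_of_forall_notMem fun z hz => ?_
  simp only [nbhd, mem_filter, mem_sdiff] at hz
  obtain ⟨⟨-, hzW⟩, a, ha, b, hb, hab, hT⟩ := hz
  exact hzW (h a ha b hb hab _ hT (by simp) (by simp) (by simp))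

namespace IsSpreading

theorem eq_of_nbhd_eq_empty (hS : IsSpreading V F) {W : Finset α} (hWV : W ⊆ V) (hW : 3 ≤ #W)
    (hWF : W ∉ F) (hnb : nbhd V F W = ∅) : W = V :=
  hS W hWV hW hWF W subset_rfl hWV hnb

theorem covered_of_not_covered (hS : IsSpreading V F) (hV : 3 < #V) {u v w : α}
    (hu : u ∈ V) (hv : v ∈ V) (hw : w ∈ V) (huv : u ≠ v) (huw : u ≠ w) (hvw : v ≠ w)
    (hu' : ¬Covered F u v) (hw' : ¬Covered F w v) : Covered F u w := by
  by_contra huw'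
  have hpair : ∀ a ∈ ({u, v, w} : Finset α), ∀ b ∈ ({u, v, w} : Finset α), a ≠ b →
      ¬Covered F a b := by
    simp only [mem_insert, mem_singleton]
    rintro a (rfl | rfl | rfl) b (rfl | rfl | rfl) hab <;> simp_all [covered_comm]
  have hcard : #({u, v, w} : Finset α) = 3 := card_eq_three.2 ⟨u, v, w, huv, huw, hvw, rfl⟩
  have hclosed := hS.eq_of_nbhd_eq_empty (by simp [insert_subset_iff, *]) hcard.ge
    (fun hF => hu' ⟨_, hF, by simp, by simp⟩)
    (nbhd_eq_empty_of_forall_triple_subset fun a ha b hb hab T hT haT hbT =>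
      (hpair a ha b hb hab ⟨T, hT, haT, hbT⟩).elim)
  rw [← hclosed] at hV
  omega

theorem exists_covered_of_notMem (hS : IsSpreading V F) (hL : IsLinearTS V F) (hV : 4 < #V)
    {T : Finset α} {v : α} (hT : T ∈ F) (hv : v ∈ V) (hvT : v ∉ T) :
    ∃ t ∈ T, Covered F v t := by
  by_contra! hunc
  have hcard : #(insert v T) = 4 := by rw [card_insert_of_notMem hvT, hL.card_eq_three hT]
  have hnb : nbhd V F (insert v T) = ∅ := by
    refine nbhd_eq_empty_of_forall_triple_subset fun a ha b hb hab T' hT' haT' hbT' => ?_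
    rw [mem_insert] at ha hb
    rcases ha with rfl | haT <;> rcases hb with rfl | hbT
    · exact absurd rfl hab
    · exact absurd ⟨T', hT', haT', hbT'⟩ (hunc b hbT)
    · exact absurd ⟨T', hT', hbT', haT'⟩ (hunc a haT)
    · rw [← hL.eq_of_mem_of_mem hT hT' hab haT hbT haT' hbT']
      exact subset_insert v T
  have hclosed := hS.eq_of_nbhd_eq_empty (insert_subset hv (hL.subset hT)) (by omega)
    (fun hF => by have := hL.card_eq_three hF; omega) hnb
  rw [← hclosed] at hV
  omega

theorem exists_triple_filter_not_covered_eq (hS : IsSpreading V F) (hL : IsLinearTS V F)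
    (hV : 4 < #V) {u v w : α} (hu : u ∈ V) (hv : v ∈ V) (hw : w ∈ V)
    (huv : u ≠ v) (huw : u ≠ w) (hvw : v ≠ w) (hu' : ¬Covered F u v) (hw' : ¬Covered F w v) :
    ∃ T ∈ F, (v ∉ T ∧ #(T.filter fun t => Covered F v t) = 1) ∧
      T.filter (fun t => ¬Covered F v t) = {u, w} := by
  obtain ⟨T, hT, huT, hwT⟩ :=
    hS.covered_of_not_covered (by omega) hu hv hw huv huw hvw hu' hw'
  obtain ⟨x, rfl⟩ :=
    exists_eq_insert_insert_singleton_of_card_eq_three (hL.card_eq_three hT) huT hwT huw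
  have hvx : v ≠ x := by
    rintro rfl
    exact hu' ⟨_, hT, huT, by simp⟩
  have hvT : v ∉ ({u, w, x} : Finset α) := by simp [huv.symm, hvw, hvx]
  have hvx' : Covered F v x := by
    obtain ⟨t, ht, hcov⟩ := hS.exists_covered_of_notMem hL hV hT hv hvT
    simp only [mem_insert, mem_singleton] at ht
    rcases ht with rfl | rfl | rfl
    · exact absurd hcov.symm hu'
    · exact absurd hcov.symm hw'
    · exact hcov
  have hvu : ¬Covered F v u := fun h => hu' h.symm
  have hvw' : ¬Covered F v w := fun h => hw' h.symm
  refine ⟨_, hT, ⟨hvT, ?_⟩, ?_⟩ <;> simp [filter_insert, filter_singleton, hvu, hvw', hvx']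

end IsSpreading

theorem card_powersetCard_two_filter_not_covered (hS : IsSpreading V F) (hL : IsLinearTS V F)
    (hV : 4 < #V) {v : α} (hv : v ∈ V) :
    #(((V.erase v).filter fun u => ¬Covered F u v).powersetCard 2) =
      #(F.filter fun T => v ∉ T ∧ #(T.filter fun t => Covered F v t) = 1) := by
  refine (card_bij (fun T _ => T.filter fun t => ¬Covered F v t) ?_ ?_ ?_).symm
  · intro T hT
    rw [mem_filter] at hT
    exact hL.filter_not_covered_mem_powersetCard hT.1 hT.2.1 hT.2.2
  · intro T hT T' hT' h
    rw [mem_filter] at hT hT'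
    exact hL.eq_of_filter_not_covered_eq hT.1 hT'.1 hT.2.2 h
  · intro p hp
    rw [mem_powersetCard] at hp
    obtain ⟨u, w, huw, rfl⟩ := card_eq_two.1 hp.2
    have hu := hp.1 (mem_insert_self u {w})
    have hw := hp.1 (by simp : w ∈ ({u, w} : Finset α))
    simp only [mem_filter, mem_erase] at hu hw
    obtain ⟨T, hT, hpriv, hfilt⟩ := hS.exists_triple_filter_not_covered_eq hL hV hu.1.2 hv hw.1.2
      hu.1.1 huw hw.1.1.symm hu.2 hw.2
    exact ⟨T, mem_filter.2 ⟨hT, hpriv⟩, hfilt⟩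

/-- In a spreading linear triple system on more than 5 vertices,
`Σ_{v ∈ V} C(d̄(v), 2) = Σ_{T ∈ F} Val(T)`, where `d̄(v)` is the number of vertices
`u ≠ v` with `{u,v}` uncovered. -/
theorem statement_11 {α : Type*} [DecidableEq α] (V : Finset α) (F : Finset (Finset α))
    (hL : IsLinearTS V F) (hS : IsSpreading V F) (hV : 5 < V.card) :
    ∑ v ∈ V, Nat.choose (((V.erase v).filter fun u => ¬Covered F u v).card) 2
      = ∑ T ∈ F, valT V F T := by
  let IsPrivate : α → Finset α → Prop := fun v T => v ∉ T ∧ #(T.filter fun t => Covered F v t) = 1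
  calc ∑ v ∈ V, Nat.choose (((V.erase v).filter fun u => ¬Covered F u v).card) 2
      = ∑ v ∈ V, #(F.bipartiteAbove IsPrivate v) := sum_congr rfl fun v hv => by
        rw [← card_powersetCard, card_powersetCard_two_filter_not_covered hS hL (by omega) hv]
        rfl
    _ = ∑ T ∈ F, #(V.bipartiteBelow IsPrivate T) :=
        sum_card_bipartiteAbove_eq_sum_card_bipartiteBelow IsPrivate
    _ = ∑ T ∈ F, valT V F T := sum_congr rfl fun T _ => by
        simp only [bipartiteBelow, valT, sdiff_eq_filter, filter_filter, IsPrivate]
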